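/- arXiv:1302.6975 — 2 statements merged into one kernel-verified Lean document; each statement's English description precedes it below -/
import Mathlib

section
/- Let q(z) = q₀z² + 2q₁z + q₂ be a nonzero real quadratic with polarization q(x,y) = q₀xy + q₁(x+y) + q₂, and let A, B : ℝ → ℝ be infinitely differentiable. Then the following are equivalent: (i) there exist a real quadratic p with ⟨p,q⟩ = 0 and a real number c such that for all real x, y: (x−y)²A''(x) − 6(x−y)A'(x) + 12A(x) + (x−y)²B''(y) + 6(x−y)B'(y) + 12B(y) = q(x,y)(p₀xy + p₁(x+y) + p₂ + c(x−y)); (ii) there exist a real quadratic π with ⟨π,q⟩ = 0 and a real polynomial P of degree at most 4 such that A(z) = q(z)π(z) + P(z) and B(z) = q(z)π(z) − P(z) for all z. Moreover, when these hold, necessarily c = 0 and (p₀, p₁, p₂) = (24π₀, 24π₁, 24π₂). -/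
/-- The left-hand side of the extremality equation for `g₋`:
`((x−y)², A(x))⁽²⁾ + ((x−y)², B(y))⁽²⁾` written out explicitly. -/
noncomputable def extremalLHSMinus (A B : ℝ → ℝ) (x y : ℝ) : ℝ :=
  (x - y) ^ 2 * deriv (deriv A) x - 6 * (x - y) * deriv A x + 12 * A x
    + (x - y) ^ 2 * deriv (deriv B) y + 6 * (x - y) * deriv B y + 12 * B y

section Aux

lemma hasDerivAt_quartic (c0 c1 c2 c3 c4 x : ℝ) :
    HasDerivAt (fun z : ℝ => c0*z^4 + c1*z^3 + c2*z^2 + c3*z + c4)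
      (4*c0*x^3 + 3*c1*x^2 + 2*c2*x + c3) x := by
  have h := ((((hasDerivAt_pow 4 x).const_mul c0).add ((hasDerivAt_pow 3 x).const_mul c1)).add
      ((hasDerivAt_pow 2 x).const_mul c2)).add (((hasDerivAt_pow 1 x).const_mul c3).add_const c4)
  convert h using 1
  · rfl
  · rfl
  · funext z; simp only [Pi.add_apply]; ring
  · push_cast; ring

lemma deriv_quartic (c0 c1 c2 c3 c4 : ℝ) :
    deriv (fun z : ℝ => c0*z^4 + c1*z^3 + c2*z^2 + c3*z + c4)
      = fun x => 4*c0*x^3 + 3*c1*x^2 + 2*c2*x + c3 :=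
  funext fun x => (hasDerivAt_quartic c0 c1 c2 c3 c4 x).deriv

lemma deriv2_quartic (c0 c1 c2 c3 c4 : ℝ) :
    deriv (deriv (fun z : ℝ => c0*z^4 + c1*z^3 + c2*z^2 + c3*z + c4))
      = fun x => 12*c0*x^2 + 6*c1*x + 2*c2 := by
  rw [deriv_quartic]
  have h : (fun x : ℝ => 4*c0*x^3 + 3*c1*x^2 + 2*c2*x + c3)
      = fun x : ℝ => 0*x^4+(4*c0)*x^3+(3*c1)*x^2+(2*c2)*x+c3 := by funext x; ring
  rw [h, deriv_quartic]; funext x; ring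

lemma diff_quartic (c0 c1 c2 c3 c4 : ℝ) :
    Differentiable ℝ (fun z : ℝ => c0*z^4 + c1*z^3 + c2*z^2 + c3*z + c4) :=
  fun z => (hasDerivAt_quartic c0 c1 c2 c3 c4 z).differentiableAt

lemma eq_add_of_deriv_eq (f G : ℝ → ℝ) (hf : Differentiable ℝ f) (hG : Differentiable ℝ G)
    (h : ∀ z, deriv f z = deriv G z) : ∀ z, f z = G z + (f 0 - G 0) := by
  intro z
  have hc := is_const_of_deriv_eq_zero (f := fun z => f z - G z) (hf.sub hG)
    (fun x => by rw [deriv_fun_sub (hf x) (hG x), h x]; ring) z 0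
  linarith [hc]

lemma quartic_of_deriv5_zero (f : ℝ → ℝ) (hf : ContDiff ℝ (⊤ : ℕ∞) f)
    (h5 : ∀ z, deriv (deriv (deriv (deriv (deriv f)))) z = 0) :
    ∃ c0 c1 c2 c3 c4 : ℝ, ∀ z, f z = c0*z^4 + c1*z^3 + c2*z^2 + c3*z + c4 := by
  have hd : ∀ g : ℝ → ℝ, ContDiff ℝ (⊤ : ℕ∞) g → Differentiable ℝ g ∧ ContDiff ℝ (⊤ : ℕ∞) (deriv g) :=
    fun g hg => ⟨(contDiff_infty_iff_deriv.mp hg).1, (contDiff_infty_iff_deriv.mp hg).2⟩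
  obtain ⟨hf0, hf1⟩ := hd f hf
  obtain ⟨hd1, hf2⟩ := hd _ hf1
  obtain ⟨hd2, hf3⟩ := hd _ hf2
  obtain ⟨hd3, hf4⟩ := hd _ hf3
  obtain ⟨hd4, _⟩ := hd _ hf4
  have h4 : ∀ z, deriv (deriv (deriv (deriv f))) z
      = 0*z^4+0*z^3+0*z^2+0*z+(deriv (deriv (deriv (deriv f))) 0) := by
    intro z
    have := is_const_of_deriv_eq_zero hd4 h5 z 0
    simpa using this
  have step : ∀ (g : ℝ → ℝ) (c0 c1 c2 c3 : ℝ), Differentiable ℝ g →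
      (∀ z, deriv g z = 4*c0*z^3+3*c1*z^2+2*c2*z+c3) →
      ∀ z, g z = c0*z^4+c1*z^3+c2*z^2+c3*z+g 0 := by
    intro g c0 c1 c2 c3 hg hdg z
    have := eq_add_of_deriv_eq g (fun z => c0*z^4+c1*z^3+c2*z^2+c3*z+0) hg
      (diff_quartic c0 c1 c2 c3 0)
      (by intro z; rw [deriv_quartic]; exact hdg z)
    have hz := this z; linarith [hz]
  set m4 := deriv (deriv (deriv (deriv f))) 0 with hm4
  have h3 := step (deriv (deriv (deriv f))) 0 0 0 m4 hd3
    (fun z => by rw [h4 z]; ring)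
  have h2 := step (deriv (deriv f)) 0 0 (m4/2) (deriv (deriv (deriv f)) 0) hd2
    (fun z => by rw [h3 z]; ring)
  have h1 := step (deriv f) 0 (m4/6) (deriv (deriv (deriv f)) 0 / 2) (deriv (deriv f) 0) hd1
    (fun z => by rw [h2 z]; ring)
  have h0 := step f (m4/24) (deriv (deriv (deriv f)) 0 / 6) (deriv (deriv f) 0 / 2) (deriv f 0) hf0
    (fun z => by rw [h1 z]; ring)
  exact ⟨_, _, _, _, _, h0⟩

lemma fifth_deriv_vanish (f : ℝ → ℝ) (hf : ContDiff ℝ (⊤ : ℕ∞) f)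
    (h : ∀ x : ℝ, ∃ e0 e1 e2 : ℝ, ∀ y : ℝ,
      (x-y)^2 * deriv (deriv f) y + 6*(x-y)*deriv f y + 12 * f y = e0 + e1*y + e2*y^2) :
    ∀ y, deriv (deriv (deriv (deriv (deriv f)))) y = 0 := by
  have hd : ∀ g : ℝ → ℝ, ContDiff ℝ (⊤ : ℕ∞) g → Differentiable ℝ g ∧ ContDiff ℝ (⊤ : ℕ∞) (deriv g) :=
    fun g hg => ⟨(contDiff_infty_iff_deriv.mp hg).1, (contDiff_infty_iff_deriv.mp hg).2⟩
  obtain ⟨hf0, hf1⟩ := hd f hf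
  obtain ⟨hd1, hf2⟩ := hd _ hf1
  obtain ⟨hd2, hf3⟩ := hd _ hf2
  obtain ⟨hd3, hf4⟩ := hd _ hf3
  obtain ⟨hd4, _⟩ := hd _ hf4
  intro y0
  set b1 := deriv f with hb1
  set b2 := deriv b1 with hb2
  set b3 := deriv b2 with hb3
  set b4 := deriv b3 with hb4
  set b5 := deriv b4 with hb5
  have H0 : ∀ y : ℝ, HasDerivAt f (b1 y) y := fun y => (hf0 y).hasDerivAt
  have H1 : ∀ y : ℝ, HasDerivAt b1 (b2 y) y := fun y => (hd1 y).hasDerivAt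
  have H2 : ∀ y : ℝ, HasDerivAt b2 (b3 y) y := fun y => (hd2 y).hasDerivAt
  have H3 : ∀ y : ℝ, HasDerivAt b3 (b4 y) y := fun y => (hd3 y).hasDerivAt
  have H4 : ∀ y : ℝ, HasDerivAt b4 (b5 y) y := fun y => (hd4 y).hasDerivAt
  set x := y0 + 1 with hx
  obtain ⟨e0, e1, e2, hm⟩ := h x
  have hlin : ∀ y : ℝ, HasDerivAt (fun y : ℝ => x - y) (-1 : ℝ) y := fun y => by
    simpa using (hasDerivAt_id y).const_sub x
  have hmD : ∀ y : ℝ, HasDerivAt (fun y => (x-y)^2 * b2 y + 6*(x-y)*b1 y + 12 * f y)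
      ((x-y)^2 * b3 y + 4*(x-y)*b2 y + 6 * b1 y) y := by
    intro y
    have t1 := (((hlin y).pow 2).mul (H2 y))
    have t2 := (((hlin y).const_mul 6).mul (H1 y))
    have t3 := (H0 y).const_mul 12
    have := (t1.add t2).add t3
    convert this using 1
    · rfl
    · rfl
    · rfl
    push_cast [Pi.pow_apply]; ring
  have hmfun : (fun y => (x-y)^2 * b2 y + 6*(x-y)*b1 y + 12 * f y)
      = (fun y : ℝ => 0*y^4 + 0*y^3 + e2*y^2 + e1*y + e0) := by
    funext y; linear_combination hm y
  have r1 : ∀ y : ℝ, (x-y)^2 * b3 y + 4*(x-y)*b2 y + 6 * b1 y = 2*e2*y + e1 := by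
    intro y
    have e := ((hmD y).deriv).symm
    rw [hmfun, deriv_quartic] at e
    rw [e]; ring
  have hmD2 : ∀ y : ℝ, HasDerivAt (fun y => (x-y)^2 * b3 y + 4*(x-y)*b2 y + 6 * b1 y)
      ((x-y)^2 * b4 y + 2*(x-y)*b3 y + 2 * b2 y) y := by
    intro y
    have t1 := (((hlin y).pow 2).mul (H3 y))
    have t2 := (((hlin y).const_mul 4).mul (H2 y))
    have t3 := (H1 y).const_mul 6
    have := (t1.add t2).add t3
    convert this using 1
    · rfl
    · rfl
    · rfl
    push_cast [Pi.pow_apply]; ring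
  have hmfun2 : (fun y => (x-y)^2 * b3 y + 4*(x-y)*b2 y + 6 * b1 y)
      = (fun y : ℝ => 0*y^4 + 0*y^3 + 0*y^2 + (2*e2)*y + e1) := by
    funext y; linear_combination r1 y
  have r2 : ∀ y : ℝ, (x-y)^2 * b4 y + 2*(x-y)*b3 y + 2 * b2 y = 2*e2 := by
    intro y
    have e := ((hmD2 y).deriv).symm
    rw [hmfun2, deriv_quartic] at e
    rw [e]; ring
  have hmD3 : ∀ y : ℝ, HasDerivAt (fun y => (x-y)^2 * b4 y + 2*(x-y)*b3 y + 2 * b2 y)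
      ((x-y)^2 * b5 y) y := by
    intro y
    have t1 := (((hlin y).pow 2).mul (H4 y))
    have t2 := (((hlin y).const_mul 2).mul (H3 y))
    have t3 := (H2 y).const_mul 2
    have := (t1.add t2).add t3
    convert this using 1
    · rfl
    · rfl
    · rfl
    push_cast [Pi.pow_apply]; ring
  have hmfun3 : (fun y => (x-y)^2 * b4 y + 2*(x-y)*b3 y + 2 * b2 y)
      = (fun y : ℝ => 0*y^4 + 0*y^3 + 0*y^2 + 0*y + 2*e2) := by
    funext y; linear_combination r2 y
  have r3 : (x - y0)^2 * b5 y0 = 0 := by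
    have e := ((hmD3 y0).deriv).symm
    rw [hmfun3, deriv_quartic] at e
    rw [e]; ring
  have hone : (x - y0)^2 = 1 := by rw [hx]; ring
  rw [hone, one_mul] at r3
  exact r3

lemma lhs_explicit (A B : ℝ → ℝ) (a4 a3 a2 a1 a0 b4 b3 b2 b1 b0 : ℝ)
    (hA : ∀ z, A z = a4*z^4+a3*z^3+a2*z^2+a1*z+a0)
    (hB : ∀ z, B z = b4*z^4+b3*z^3+b2*z^2+b1*z+b0) :
    ∀ x y, extremalLHSMinus A B x y =
      (x-y)^2*(12*a4*x^2+6*a3*x+2*a2) - 6*(x-y)*(4*a4*x^3+3*a3*x^2+2*a2*x+a1)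
        + 12*(a4*x^4+a3*x^3+a2*x^2+a1*x+a0)
        + (x-y)^2*(12*b4*y^2+6*b3*y+2*b2) + 6*(x-y)*(4*b4*y^3+3*b3*y^2+2*b2*y+b1)
        + 12*(b4*y^4+b3*y^3+b2*y^2+b1*y+b0) := by
  have hAf : A = fun z => a4*z^4+a3*z^3+a2*z^2+a1*z+a0 := funext hA
  have hBf : B = fun z => b4*z^4+b3*z^3+b2*z^2+b1*z+b0 := funext hB
  intro x y
  rw [extremalLHSMinus, hAf, hBf, deriv2_quartic, deriv2_quartic, deriv_quartic, deriv_quartic]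

lemma coeff_eqs (a4 a3 a2 a1 a0 b4 b3 b2 b1 b0 q0 q1 q2 p0 p1 p2 c : ℝ)
    (hid : ∀ x y : ℝ,
      (x-y)^2*(12*a4*x^2+6*a3*x+2*a2) - 6*(x-y)*(4*a4*x^3+3*a3*x^2+2*a2*x+a1)
        + 12*(a4*x^4+a3*x^3+a2*x^2+a1*x+a0)
        + (x-y)^2*(12*b4*y^2+6*b3*y+2*b2) + 6*(x-y)*(4*b4*y^3+3*b3*y^2+2*b2*y+b1)
        + 12*(b4*y^4+b3*y^3+b2*y^2+b1*y+b0)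
      = (q0*x*y+q1*(x+y)+q2)*(p0*x*y+p1*(x+y)+p2+c*(x-y))) :
    12*(a0+b0) = q2*p2 ∧
    6*(a1+b1) = q1*p2+q2*p1 + c*q2 ∧
    6*(a1+b1) = q1*p2+q2*p1 - c*q2 ∧
    2*(a2+b2) = q1*p1 + c*q1 ∧
    2*(a2+b2) = q1*p1 - c*q1 ∧
    8*(a2+b2) = q0*p2+q2*p0+2*q1*p1 ∧
    6*(a3+b3) = q0*p1+q1*p0 + c*q0 ∧
    6*(a3+b3) = q0*p1+q1*p0 - c*q0 ∧
    12*(a4+b4) = q0*p0 := by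
  refine ⟨?_, ?_, ?_, ?_, ?_, ?_, ?_, ?_, ?_⟩
  · linear_combination hid 0 0
  · linear_combination (hid 1 0 - hid (-1) 0) / 2
  · linear_combination (hid 0 1 - hid 0 (-1)) / 2
  · linear_combination (hid 1 0 + hid (-1) 0 - 2 * hid 0 0) / 2
  · linear_combination (hid 0 1 + hid 0 (-1) - 2 * hid 0 0) / 2
  · linear_combination (hid 1 1 - hid 1 (-1) - hid (-1) 1 + hid (-1) (-1)) / 4
  · linear_combination (hid 1 1 + hid (-1) 1 - 2 * hid 0 1 - hid 1 (-1) - hid (-1) (-1) + 2 * hid 0 (-1)) / 4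
  · linear_combination (hid 1 1 + hid 1 (-1) - 2 * hid 1 0 - hid (-1) 1 - hid (-1) (-1) + 2 * hid (-1) 0) / 4
  · linear_combination (hid 1 1 + hid (-1) 1 + hid 1 (-1) + hid (-1) (-1) - 2*hid 0 1 - 2*hid 0 (-1) - 2*hid 1 0 - 2*hid (-1) 0 + 4*hid 0 0) / 4

end Aux

/-- Extremality equation for `g₋` of a regular ambitoric structure: (i) the scalar
curvature equation holds with some quadratic `p` orthogonal to `q` and constant `c`
iff (ii) `A = qπ + P`, `B = qπ − P` with `π` orthogonal to `q` and `P` a quartic;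
moreover necessarily `c = 0` and `p = 24π`. -/
theorem ambitoric_extremal_minus
    (q0 q1 q2 : ℝ) (hq : ¬(q0 = 0 ∧ q1 = 0 ∧ q2 = 0))
    (A B : ℝ → ℝ) (hA : ContDiff ℝ (⊤ : ℕ∞) A) (hB : ContDiff ℝ (⊤ : ℕ∞) B) :
    ((∃ p0 p1 p2 c : ℝ,
        2 * p1 * q1 - (p2 * q0 + p0 * q2) = 0 ∧
        ∀ x y : ℝ, extremalLHSMinus A B x y
          = (q0 * x * y + q1 * (x + y) + q2) *
              (p0 * x * y + p1 * (x + y) + p2 + c * (x - y)))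
      ↔ (∃ π0 π1 π2 c0 c1 c2 c3 c4 : ℝ,
          2 * π1 * q1 - (π2 * q0 + π0 * q2) = 0 ∧
          (∀ z : ℝ, A z = (q0 * z ^ 2 + 2 * q1 * z + q2) * (π0 * z ^ 2 + 2 * π1 * z + π2)
              + (c0 * z ^ 4 + c1 * z ^ 3 + c2 * z ^ 2 + c3 * z + c4)) ∧
          (∀ z : ℝ, B z = (q0 * z ^ 2 + 2 * q1 * z + q2) * (π0 * z ^ 2 + 2 * π1 * z + π2)
              - (c0 * z ^ 4 + c1 * z ^ 3 + c2 * z ^ 2 + c3 * z + c4))))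
    ∧ (∀ p0 p1 p2 c π0 π1 π2 c0 c1 c2 c3 c4 : ℝ,
        (2 * p1 * q1 - (p2 * q0 + p0 * q2) = 0 ∧
          ∀ x y : ℝ, extremalLHSMinus A B x y
            = (q0 * x * y + q1 * (x + y) + q2) *
                (p0 * x * y + p1 * (x + y) + p2 + c * (x - y))) →
        (2 * π1 * q1 - (π2 * q0 + π0 * q2) = 0 ∧
          (∀ z : ℝ, A z = (q0 * z ^ 2 + 2 * q1 * z + q2) * (π0 * z ^ 2 + 2 * π1 * z + π2)
              + (c0 * z ^ 4 + c1 * z ^ 3 + c2 * z ^ 2 + c3 * z + c4)) ∧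
          (∀ z : ℝ, B z = (q0 * z ^ 2 + 2 * q1 * z + q2) * (π0 * z ^ 2 + 2 * π1 * z + π2)
              - (c0 * z ^ 4 + c1 * z ^ 3 + c2 * z ^ 2 + c3 * z + c4))) →
        c = 0 ∧ p0 = 24 * π0 ∧ p1 = 24 * π1 ∧ p2 = 24 * π2) := by
  have hA' : ContDiff ℝ (⊤ : ℕ∞) A := hA.of_le (by simp)
  have hB' : ContDiff ℝ (⊤ : ℕ∞) B := hB.of_le (by simp)
  constructor
  · constructor
    · -- (i) → (ii)
      rintro ⟨p0, p1, p2, c, horth, hid⟩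
      simp only [extremalLHSMinus] at hid
      -- B is a quartic
      have hB5 := fifth_deriv_vanish B hB' (by
        intro x
        refine ⟨(q1*x+q2)*(p1*x+p2+c*x) - x^2*deriv (deriv A) x + 6*x*deriv A x - 12*A x,
          (q0*x+q1)*(p1*x+p2+c*x) + (q1*x+q2)*(p0*x+p1-c) + 2*x*deriv (deriv A) x - 6*deriv A x,
          (q0*x+q1)*(p0*x+p1-c) - deriv (deriv A) x, ?_⟩
        intro y
        linear_combination hid x y)
      have hA5 := fifth_deriv_vanish A hA' (by
        intro X
        refine ⟨(q1*X+q2)*(p1*X+p2-c*X) - X^2*deriv (deriv B) X + 6*X*deriv B X - 12*B X,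
          (q0*X+q1)*(p1*X+p2-c*X) + (q1*X+q2)*(p0*X+p1+c) + 2*X*deriv (deriv B) X - 6*deriv B X,
          (q0*X+q1)*(p0*X+p1+c) - deriv (deriv B) X, ?_⟩
        intro Y
        linear_combination hid Y X)
      obtain ⟨a4, a3, a2, a1, a0, hApoly⟩ := quartic_of_deriv5_zero A hA' hA5
      obtain ⟨b4, b3, b2, b1, b0, hBpoly⟩ := quartic_of_deriv5_zero B hB' hB5
      have hid' := lhs_explicit A B a4 a3 a2 a1 a0 b4 b3 b2 b1 b0 hApoly hBpoly
      have hid2 : ∀ x y : ℝ,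
          (x-y)^2*(12*a4*x^2+6*a3*x+2*a2) - 6*(x-y)*(4*a4*x^3+3*a3*x^2+2*a2*x+a1)
            + 12*(a4*x^4+a3*x^3+a2*x^2+a1*x+a0)
            + (x-y)^2*(12*b4*y^2+6*b3*y+2*b2) + 6*(x-y)*(4*b4*y^3+3*b3*y^2+2*b2*y+b1)
            + 12*(b4*y^4+b3*y^3+b2*y^2+b1*y+b0)
          = (q0*x*y+q1*(x+y)+q2)*(p0*x*y+p1*(x+y)+p2+c*(x-y)) := by
        intro x y
        rw [← hid' x y]
        have := hid x y
        simp only [extremalLHSMinus]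
        linear_combination this
      obtain ⟨E1, E2x, E2y, E3x, E3y, E4, E5x, E5y, E9⟩ :=
        coeff_eqs a4 a3 a2 a1 a0 b4 b3 b2 b1 b0 q0 q1 q2 p0 p1 p2 c hid2
      refine ⟨p0/24, p1/24, p2/24, (a4-b4)/2, (a3-b3)/2, (a2-b2)/2, (a1-b1)/2, (a0-b0)/2,
        by linear_combination horth/24, ?_, ?_⟩
      · intro z
        linear_combination (hApoly z) + (z^4/24)*E9 + (z^3/24)*(E5x+E5y)
          + (z^2/24)*(E4+E3x+E3y) + (z/24)*(E2x+E2y) + (1/24)*E1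
      · intro z
        linear_combination (hBpoly z) + (z^4/24)*E9 + (z^3/24)*(E5x+E5y)
          + (z^2/24)*(E4+E3x+E3y) + (z/24)*(E2x+E2y) + (1/24)*E1
    · -- (ii) → (i)
      rintro ⟨π0, π1, π2, c0, c1, c2, c3, c4, horth, hAeq, hBeq⟩
      refine ⟨24*π0, 24*π1, 24*π2, 0, by linear_combination 24*horth, ?_⟩
      have hApoly : ∀ z : ℝ, A z = (q0*π0+c0)*z^4+(2*q0*π1+2*q1*π0+c1)*z^3
          +(q0*π2+4*q1*π1+q2*π0+c2)*z^2+(2*q1*π2+2*q2*π1+c3)*z+(q2*π2+c4) := by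
        intro z; rw [hAeq z]; ring
      have hBpoly : ∀ z : ℝ, B z = (q0*π0-c0)*z^4+(2*q0*π1+2*q1*π0-c1)*z^3
          +(q0*π2+4*q1*π1+q2*π0-c2)*z^2+(2*q1*π2+2*q2*π1-c3)*z+(q2*π2-c4) := by
        intro z; rw [hBeq z]; ring
      have hid' := lhs_explicit A B _ _ _ _ _ _ _ _ _ _ hApoly hBpoly
      intro x y
      rw [hid' x y]
      linear_combination (-4*(x-y)^2) * horth
  · -- moreover part
    rintro p0 p1 p2 c π0 π1 π2 c0 c1 c2 c3 c4 ⟨horthp, hid⟩ ⟨horthπ, hAeq, hBeq⟩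
    have hApoly : ∀ z : ℝ, A z = (q0*π0+c0)*z^4+(2*q0*π1+2*q1*π0+c1)*z^3
        +(q0*π2+4*q1*π1+q2*π0+c2)*z^2+(2*q1*π2+2*q2*π1+c3)*z+(q2*π2+c4) := by
      intro z; rw [hAeq z]; ring
    have hBpoly : ∀ z : ℝ, B z = (q0*π0-c0)*z^4+(2*q0*π1+2*q1*π0-c1)*z^3
        +(q0*π2+4*q1*π1+q2*π0-c2)*z^2+(2*q1*π2+2*q2*π1-c3)*z+(q2*π2-c4) := by
      intro z; rw [hBeq z]; ring
    have hid' := lhs_explicit A B _ _ _ _ _ _ _ _ _ _ hApoly hBpoly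
    have hid2 := fun x y => (hid' x y).symm.trans (hid x y)
    obtain ⟨E1, E2x, E2y, E3x, E3y, E4, E5x, E5y, E9⟩ :=
      coeff_eqs _ _ _ _ _ _ _ _ _ _ q0 q1 q2 p0 p1 p2 c hid2
    have hcq0 : c * q0 = 0 := by linear_combination (E5y - E5x)/2
    have hcq1 : c * q1 = 0 := by linear_combination (E3y - E3x)/2
    have hcq2 : c * q2 = 0 := by linear_combination (E2y - E2x)/2
    have hc : c = 0 := by
      by_contra hc0
      exact hq ⟨(mul_eq_zero.mp hcq0).resolve_left hc0,
        (mul_eq_zero.mp hcq1).resolve_left hc0,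
        (mul_eq_zero.mp hcq2).resolve_left hc0⟩
    refine ⟨hc, ?_⟩
    have h9 : q0*(p0-24*π0) = 0 := by linear_combination -E9
    have h7 : q0*(p1-24*π1) + q1*(p0-24*π0) = 0 := by linear_combination -(E5x+E5y)/2
    have h4 : q1*(p1-24*π1) = 0 := by linear_combination -(E3x+E3y)/2 - 4*horthπ
    have h6 : q0*(p2-24*π2) + q2*(p0-24*π0) = 0 := by
      linear_combination -E4 + 8*horthπ - 2*h4
    have h2 : q1*(p2-24*π2) + q2*(p1-24*π1) = 0 := by linear_combination -(E2x+E2y)/2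
    have h1 : q2*(p2-24*π2) = 0 := by linear_combination -E1
    by_cases hq0 : q0 = 0
    · by_cases hq1 : q1 = 0
      · have hq2 : q2 ≠ 0 := fun h => hq ⟨hq0, hq1, h⟩
        have d0 : p0 - 24*π0 = 0 := by
          have h' : q2*(p0-24*π0) = 0 := by linear_combination h6 - (p2-24*π2)*hq0
          exact (mul_eq_zero.mp h').resolve_left hq2
        have d1 : p1 - 24*π1 = 0 := by
          have h' : q2*(p1-24*π1) = 0 := by linear_combination h2 - (p2-24*π2)*hq1
          exact (mul_eq_zero.mp h').resolve_left hq2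
        have d2 : p2 - 24*π2 = 0 := (mul_eq_zero.mp h1).resolve_left hq2
        exact ⟨by linear_combination d0, by linear_combination d1, by linear_combination d2⟩
      · have d1 : p1 - 24*π1 = 0 := (mul_eq_zero.mp h4).resolve_left hq1
        have d0 : p0 - 24*π0 = 0 := by
          have h' : q1*(p0-24*π0) = 0 := by linear_combination h7 - (p1-24*π1)*hq0
          exact (mul_eq_zero.mp h').resolve_left hq1
        have d2 : p2 - 24*π2 = 0 := by
          have h' : q1*(p2-24*π2) = 0 := by linear_combination h2 - q2*d1
          exact (mul_eq_zero.mp h').resolve_left hq1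
        exact ⟨by linear_combination d0, by linear_combination d1, by linear_combination d2⟩
    · have d0 : p0 - 24*π0 = 0 := (mul_eq_zero.mp h9).resolve_left hq0
      have d1 : p1 - 24*π1 = 0 := by
        have h' : q0*(p1-24*π1) = 0 := by linear_combination h7 - q1*d0
        exact (mul_eq_zero.mp h').resolve_left hq0
      have d2 : p2 - 24*π2 = 0 := by
        have h' : q0*(p2-24*π2) = 0 := by linear_combination h6 - q2*d0
        exact (mul_eq_zero.mp h').resolve_left hq0
      exact ⟨by linear_combination d0, by linear_combination d1, by linear_combination d2⟩
end

section
/- Let q(z) = q₀z² + 2q₁z + q₂ be a nonzero real quadratic with polarization q(x,y) = q₀xy + q₁(x+y) + q₂, and let Π be a real polynomial of degree at most 4. Then q(x,y)²Π''(x) − 6(q₀y + q₁)q(x,y)Π'(x) + 12(q₀y + q₁)²Π(x) + q(x,y)²Π''(y) − 6(q₀x + q₁)q(x,y)Π'(y) + 12(q₀x + q₁)²Π(y) = 0 for all real x, y if and only if there exists a real quadratic π with ⟨π,q⟩ = 0 such that Π(z) = q(z)π(z) for all z. -/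
/-!
Both sides are linear in `Π`. In the basis `1, x + y, x² + y², xy, xy(x + y), x²y²` of symmetric
biquadratics the identity becomes six linear equations on the coefficients of `Π`. For `Π = qπ`
they are linear in `π` and vanish on the plane `π ⊥ q`, so each is a multiple of `⟨π, q⟩`.
Conversely, if `q₀ ≠ 0` the equations make the division of `Π` by `q` exact with an orthogonal
quotient; the case `q₂ ≠ 0` reduces to this by the reversal `z ↦ 1/z`, which swaps `q₀ ↔ q₂` and
preserves both the equations and `⟨π, q⟩`; and if `q = 2q₁z` the equations force `Π` to be odd.
-/

namespace Ambitoric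

section CommRing

variable {R : Type*} [CommRing R]

def symmetricPart (q0 q1 q2 d0 d1 d2 d3 d4 x y : R) : R :=
  (q0 * x * y + q1 * (x + y) + q2) ^ 2 * (12 * d0 * x ^ 2 + 6 * d1 * x + 2 * d2)
    - 6 * (q0 * y + q1) * (q0 * x * y + q1 * (x + y) + q2) *
        (4 * d0 * x ^ 3 + 3 * d1 * x ^ 2 + 2 * d2 * x + d3)
    + 12 * (q0 * y + q1) ^ 2 * (d0 * x ^ 4 + d1 * x ^ 3 + d2 * x ^ 2 + d3 * x + d4)
    + (q0 * x * y + q1 * (x + y) + q2) ^ 2 * (12 * d0 * y ^ 2 + 6 * d1 * y + 2 * d2)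
    - 6 * (q0 * x + q1) * (q0 * x * y + q1 * (x + y) + q2) *
        (4 * d0 * y ^ 3 + 3 * d1 * y ^ 2 + 2 * d2 * y + d3)
    + 12 * (q0 * x + q1) ^ 2 * (d0 * y ^ 4 + d1 * y ^ 3 + d2 * y ^ 2 + d3 * y + d4)

/-- The coefficients of `symmetricPart` on `1, x + y, x² + y², xy, xy(x + y), x²y²`, divided by
`4, 2, 2, 8, 2, 4` respectively, all vanish. -/
def SymmetricPartCoeffsVanish (q0 q1 q2 d0 d1 d2 d3 d4 : R) : Prop :=
  q2 ^ 2 * d2 - 3 * q1 * q2 * d3 + 6 * q1 ^ 2 * d4 = 0 ∧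
  3 * q2 ^ 2 * d1 - 2 * q1 * q2 * d2 - 3 * q0 * q2 * d3 + 12 * q0 * q1 * d4 = 0 ∧
  6 * q2 ^ 2 * d0 - 3 * q1 * q2 * d1 + 2 * q1 ^ 2 * d2 - 3 * q0 * q1 * d3 + 6 * q0 ^ 2 * d4 = 0 ∧
  3 * q1 * q2 * d1 - 2 * (q1 ^ 2 + q0 * q2) * d2 + 3 * q0 * q1 * d3 = 0 ∧
  12 * q1 * q2 * d0 - 3 * q0 * q2 * d1 - 2 * q0 * q1 * d2 + 3 * q0 ^ 2 * d3 = 0 ∧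
  6 * q1 ^ 2 * d0 - 3 * q0 * q1 * d1 + q0 ^ 2 * d2 = 0

/-- `d₀z⁴ + d₁z³ + d₂z² + d₃z + d₄ = (q₀z² + 2q₁z + q₂)(π₀z² + 2π₁z + π₂)` coefficientwise,
for some `π` with `⟨π, q⟩ = 0`. -/
def IsOrthogonalMultiple (q0 q1 q2 d0 d1 d2 d3 d4 : R) : Prop :=
  ∃ π0 π1 π2 : R, 2 * π1 * q1 - (π2 * q0 + π0 * q2) = 0 ∧
    d0 = q0 * π0 ∧ d1 = 2 * (q0 * π1 + q1 * π0) ∧ d2 = q0 * π2 + 4 * q1 * π1 + q2 * π0 ∧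
    d3 = 2 * (q1 * π2 + q2 * π1) ∧ d4 = q2 * π2

variable {q0 q1 q2 d0 d1 d2 d3 d4 : R}

theorem SymmetricPartCoeffsVanish.reverse
    (h : SymmetricPartCoeffsVanish q0 q1 q2 d0 d1 d2 d3 d4) :
    SymmetricPartCoeffsVanish q2 q1 q0 d4 d3 d2 d1 d0 := by
  obtain ⟨h00, h01, h02, h11, h12, h22⟩ := h
  exact ⟨by linear_combination h22, by linear_combination h12, by linear_combination h02,
    by linear_combination h11, by linear_combination h01, by linear_combination h00⟩

theorem IsOrthogonalMultiple.reverse (h : IsOrthogonalMultiple q0 q1 q2 d0 d1 d2 d3 d4) :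
    IsOrthogonalMultiple q2 q1 q0 d4 d3 d2 d1 d0 := by
  obtain ⟨π0, π1, π2, horth, h0, h1, h2, h3, h4⟩ := h
  exact ⟨π2, π1, π0, by linear_combination horth, h4, by linear_combination h3,
    by linear_combination h2, by linear_combination h1, h0⟩

theorem IsOrthogonalMultiple.symmetricPartCoeffsVanish
    (h : IsOrthogonalMultiple q0 q1 q2 d0 d1 d2 d3 d4) :
    SymmetricPartCoeffsVanish q0 q1 q2 d0 d1 d2 d3 d4 := by
  obtain ⟨π0, π1, π2, horth, rfl, rfl, rfl, rfl, rfl⟩ := h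
  exact ⟨by linear_combination -q2 ^ 2 * horth, by linear_combination -4 * q1 * q2 * horth,
    by linear_combination (4 * q1 ^ 2 - 6 * q0 * q2) * horth,
    by linear_combination (2 * q0 * q2 - 4 * q1 ^ 2) * horth,
    by linear_combination -4 * q0 * q1 * horth, by linear_combination -q0 ^ 2 * horth⟩

end CommRing

variable {K : Type*} [Field K] [CharZero K]

theorem forall_quartic_eq_zero_iff {a b c d e : K} :
    (∀ z : K, a * z ^ 4 + b * z ^ 3 + c * z ^ 2 + d * z + e = 0) ↔
      a = 0 ∧ b = 0 ∧ c = 0 ∧ d = 0 ∧ e = 0 := by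
  refine ⟨fun h => ?_, ?_⟩
  · refine ⟨?_, ?_, ?_, ?_, ?_⟩
    · linear_combination (h 2 + h (-2)) / 24 - (h 1 + h (-1)) / 6 + h 0 / 4
    · linear_combination (h 2 - h (-2)) / 12 - (h 1 - h (-1)) / 6
    · linear_combination -(h 2 + h (-2)) / 24 + (h 1 + h (-1)) * (2 / 3) - h 0 * (5 / 4)
    · linear_combination -(h 2 - h (-2)) / 12 + (h 1 - h (-1)) * (2 / 3)
    · linear_combination h 0
  · rintro ⟨rfl, rfl, rfl, rfl, rfl⟩ z
    ring

theorem forall_symmBiquadratic_eq_zero_iff {a b c d e f : K} :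
    (∀ x y : K, a + b * (x + y) + c * (x ^ 2 + y ^ 2) + d * (x * y) + e * (x * y * (x + y))
      + f * (x * y) ^ 2 = 0) ↔
      a = 0 ∧ b = 0 ∧ c = 0 ∧ d = 0 ∧ e = 0 ∧ f = 0 := by
  refine ⟨fun h => ?_, ?_⟩
  · refine ⟨?_, ?_, ?_, ?_, ?_, ?_⟩
    · linear_combination h 0 0
    · linear_combination (h 1 0 - h (-1) 0) / 2
    · linear_combination (h 1 0 + h (-1) 0) / 2 - h 0 0
    · linear_combination (h 1 1 + h (-1) (-1)) / 4 - h 1 (-1) / 2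
    · linear_combination (h 1 1 - h (-1) (-1)) / 4 - (h 1 0 - h (-1) 0) / 2
    · linear_combination
        (h 1 1 + h (-1) (-1)) / 4 + h 1 (-1) / 2 + h 0 0 - (h 1 0 + h (-1) 0)
  · rintro ⟨rfl, rfl, rfl, rfl, rfl, rfl⟩ x y
    ring

variable {q0 q1 q2 d0 d1 d2 d3 d4 : K}

theorem forall_symmetricPart_eq_zero_iff :
    (∀ x y, symmetricPart q0 q1 q2 d0 d1 d2 d3 d4 x y = 0) ↔
      SymmetricPartCoeffsVanish q0 q1 q2 d0 d1 d2 d3 d4 := by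
  have expand : ∀ x y, symmetricPart q0 q1 q2 d0 d1 d2 d3 d4 x y =
      4 * (q2 ^ 2 * d2 - 3 * q1 * q2 * d3 + 6 * q1 ^ 2 * d4)
      + 2 * (3 * q2 ^ 2 * d1 - 2 * q1 * q2 * d2 - 3 * q0 * q2 * d3 + 12 * q0 * q1 * d4) * (x + y)
      + 2 * (6 * q2 ^ 2 * d0 - 3 * q1 * q2 * d1 + 2 * q1 ^ 2 * d2 - 3 * q0 * q1 * d3
          + 6 * q0 ^ 2 * d4) * (x ^ 2 + y ^ 2)
      + 8 * (3 * q1 * q2 * d1 - 2 * (q1 ^ 2 + q0 * q2) * d2 + 3 * q0 * q1 * d3) * (x * y)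
      + 2 * (12 * q1 * q2 * d0 - 3 * q0 * q2 * d1 - 2 * q0 * q1 * d2 + 3 * q0 ^ 2 * d3)
          * (x * y * (x + y))
      + 4 * (6 * q1 ^ 2 * d0 - 3 * q0 * q1 * d1 + q0 ^ 2 * d2) * (x * y) ^ 2 := by
    intro x y
    unfold symmetricPart
    ring
  simp only [expand, forall_symmBiquadratic_eq_zero_iff, SymmetricPartCoeffsVanish, mul_eq_zero,
    OfNat.ofNat_ne_zero, false_or]

theorem SymmetricPartCoeffsVanish.isOrthogonalMultiple_of_leading_ne_zero
    (h : SymmetricPartCoeffsVanish q0 q1 q2 d0 d1 d2 d3 d4) (hq0 : q0 ≠ 0) :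
    IsOrthogonalMultiple q0 q1 q2 d0 d1 d2 d3 d4 := by
  obtain ⟨-, -, h02, h11, h12, h22⟩ := h
  -- `π` is the quotient of `Π` by `q`; `h3` and `h4` say that the remainder vanishes.
  have h3 : q0 ^ 3 * d3 = 2 * q1 * (q0 ^ 2 * d2 - 2 * q0 * q1 * d1 + (4 * q1 ^ 2 - q0 * q2) * d0)
      + q0 * q2 * (q0 * d1 - 2 * q1 * d0) := by
    linear_combination (q0 / 3) * h12 - (4 * q1 / 3) * h22
  have h4 :
      q0 ^ 3 * d4 = q2 * (q0 ^ 2 * d2 - 2 * q0 * q1 * d1 + (4 * q1 ^ 2 - q0 * q2) * d0) := by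
    linear_combination (q0 / 6) * h02 + (q0 / 2) * h11 - (q1 / 3) * h12
  refine ⟨d0 / q0, (q0 * d1 - 2 * q1 * d0) / (2 * q0 ^ 2),
    (q0 ^ 2 * d2 - 2 * q0 * q1 * d1 + (4 * q1 ^ 2 - q0 * q2) * d0) / q0 ^ 3, ?_, ?_, ?_, ?_, ?_, ?_⟩
  · field_simp
    linear_combination -h22
  · field_simp
  · field_simp
    ring
  · field_simp
    ring
  · field_simp
    linear_combination h3
  · field_simp
    linear_combination h4

theorem SymmetricPartCoeffsVanish.isOrthogonalMultiple_of_linear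
    (h : SymmetricPartCoeffsVanish 0 q1 0 d0 d1 d2 d3 d4) (hq1 : q1 ≠ 0) :
    IsOrthogonalMultiple 0 q1 0 d0 d1 d2 d3 d4 := by
  obtain ⟨h00, -, h02, -, -, h22⟩ := h
  obtain rfl : d0 = 0 := by simpa [hq1] using h22
  obtain rfl : d2 = 0 := by simpa [hq1] using h02
  obtain rfl : d4 = 0 := by simpa [hq1] using h00
  refine ⟨d1 / (2 * q1), 0, d3 / (2 * q1), by ring, by ring, ?_, by ring, ?_, by ring⟩ <;>
    · field_simp
      ring

theorem SymmetricPartCoeffsVanish.isOrthogonalMultiple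
    (h : SymmetricPartCoeffsVanish q0 q1 q2 d0 d1 d2 d3 d4)
    (hq : ¬(q0 = 0 ∧ q1 = 0 ∧ q2 = 0)) :
    IsOrthogonalMultiple q0 q1 q2 d0 d1 d2 d3 d4 := by
  by_cases hq0 : q0 = 0
  · by_cases hq2 : q2 = 0
    · subst hq0 hq2
      exact h.isOrthogonalMultiple_of_linear fun hq1 => hq ⟨rfl, hq1, rfl⟩
    · exact (h.reverse.isOrthogonalMultiple_of_leading_ne_zero hq2).reverse
  · exact h.isOrthogonalMultiple_of_leading_ne_zero hq0

theorem isOrthogonalMultiple_iff :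
    IsOrthogonalMultiple q0 q1 q2 d0 d1 d2 d3 d4 ↔
      ∃ π0 π1 π2 : K, 2 * π1 * q1 - (π2 * q0 + π0 * q2) = 0 ∧
        ∀ z : K, d0 * z ^ 4 + d1 * z ^ 3 + d2 * z ^ 2 + d3 * z + d4
          = (q0 * z ^ 2 + 2 * q1 * z + q2) * (π0 * z ^ 2 + 2 * π1 * z + π2) := by
  refine exists₃_congr fun π0 π1 π2 => and_congr_right fun _ => ?_
  have expand : ∀ z : K, d0 * z ^ 4 + d1 * z ^ 3 + d2 * z ^ 2 + d3 * z + d4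
      - (q0 * z ^ 2 + 2 * q1 * z + q2) * (π0 * z ^ 2 + 2 * π1 * z + π2)
      = (d0 - q0 * π0) * z ^ 4 + (d1 - 2 * (q0 * π1 + q1 * π0)) * z ^ 3
        + (d2 - (q0 * π2 + 4 * q1 * π1 + q2 * π0)) * z ^ 2
        + (d3 - 2 * (q1 * π2 + q2 * π1)) * z + (d4 - q2 * π2) := fun z => by ring
  rw [forall_congr' fun _ => (sub_eq_zero (G := K)).symm]
  simp only [expand, forall_quartic_eq_zero_iff, sub_eq_zero]

end Ambitoric

open Ambitoric in
/-- Symmetric part of the extremality equation for `g₊`: for a nonzero quadratic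
`q(z) = q₀z² + 2q₁z + q₂` with polarization `q(x,y) = q₀xy + q₁(x+y) + q₂`, and a
quartic `Π(z) = d₀z⁴ + d₁z³ + d₂z² + d₃z + d₄`, the identity
`q(x,y)²Π''(x) − 6(q₀y+q₁)q(x,y)Π'(x) + 12(q₀y+q₁)²Π(x)
 + q(x,y)²Π''(y) − 6(q₀x+q₁)q(x,y)Π'(y) + 12(q₀x+q₁)²Π(y) = 0`
holds for all `x`, `y` iff `Π = qπ` for some quadratic `π` orthogonal to `q`. -/
theorem ambitoric_symmetric_part_classification
    (q0 q1 q2 : ℝ) (hq : ¬(q0 = 0 ∧ q1 = 0 ∧ q2 = 0))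
    (d0 d1 d2 d3 d4 : ℝ) :
    (∀ x y : ℝ,
      (q0 * x * y + q1 * (x + y) + q2) ^ 2 * (12 * d0 * x ^ 2 + 6 * d1 * x + 2 * d2)
        - 6 * (q0 * y + q1) * (q0 * x * y + q1 * (x + y) + q2) *
            (4 * d0 * x ^ 3 + 3 * d1 * x ^ 2 + 2 * d2 * x + d3)
        + 12 * (q0 * y + q1) ^ 2 * (d0 * x ^ 4 + d1 * x ^ 3 + d2 * x ^ 2 + d3 * x + d4)
        + (q0 * x * y + q1 * (x + y) + q2) ^ 2 * (12 * d0 * y ^ 2 + 6 * d1 * y + 2 * d2)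
        - 6 * (q0 * x + q1) * (q0 * x * y + q1 * (x + y) + q2) *
            (4 * d0 * y ^ 3 + 3 * d1 * y ^ 2 + 2 * d2 * y + d3)
        + 12 * (q0 * x + q1) ^ 2 * (d0 * y ^ 4 + d1 * y ^ 3 + d2 * y ^ 2 + d3 * y + d4)
        = 0)
    ↔ ∃ π0 π1 π2 : ℝ, 2 * π1 * q1 - (π2 * q0 + π0 * q2) = 0 ∧
        ∀ z : ℝ, d0 * z ^ 4 + d1 * z ^ 3 + d2 * z ^ 2 + d3 * z + d4
          = (q0 * z ^ 2 + 2 * q1 * z + q2) * (π0 * z ^ 2 + 2 * π1 * z + π2) := by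
  calc (∀ x y, symmetricPart q0 q1 q2 d0 d1 d2 d3 d4 x y = 0)
      ↔ SymmetricPartCoeffsVanish q0 q1 q2 d0 d1 d2 d3 d4 := forall_symmetricPart_eq_zero_iff
    _ ↔ IsOrthogonalMultiple q0 q1 q2 d0 d1 d2 d3 d4 :=
        ⟨fun h => h.isOrthogonalMultiple hq, IsOrthogonalMultiple.symmetricPartCoeffsVanish⟩
    _ ↔ _ := isOrthogonalMultiple_iff
end
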